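/- Let R be a commutative ring with Noetherian spectrum, r ∈ R, and let p_1,...,p_k be the minimal primes of R/(r) (pulled back to R). Let M be a finitely generated R-module and X, Y closed subsets of 𝔸_M. Then X = Y if and only if the base changes X_{R[1/r]} = Y_{R[1/r]} and X_{R/p_i} = Y_{R/p_i} for all i = 1,...,k. -/
import Mathlib


open scoped TensorProduct

universe u

/-- A polynomial law `M → N` over `R`: a family of maps `A ⊗[R] M → A ⊗[R] N`, one for every
commutative `R`-algebra `A`, commuting with base change along all `R`-algebra homomorphisms. -/
structure PolyLaw (R : Type u) [CommRing R] (M N : Type u)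
    [AddCommGroup M] [Module R M] [AddCommGroup N] [Module R N] : Type (u + 1) where
  toFun : ∀ (A : Type u) [CommRing A] [Algebra R A], A ⊗[R] M → A ⊗[R] N
  isCompat : ∀ {A B : Type u} [CommRing A] [Algebra R A] [CommRing B] [Algebra R B]
      (φ : A →ₐ[R] B) (x : A ⊗[R] M),
      LinearMap.rTensor N φ.toLinearMap (toFun A x) = toFun B (LinearMap.rTensor M φ.toLinearMap x)

namespace PolyLaw

variable {R : Type u} [CommRing R] {M N P : Type u}
  [AddCommGroup M] [Module R M] [AddCommGroup N] [Module R N] [AddCommGroup P] [Module R P]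

theorem ext' {f g : PolyLaw R M N}
    (h : ∀ (A : Type u) [CommRing A] [Algebra R A] (x : A ⊗[R] M), f.toFun A x = g.toFun A x) :
    f = g := by
  cases f; cases g
  simp only [mk.injEq]
  funext A instA instB x
  exact h A x

/-- A polynomial law is homogeneous of degree `d` if `φ_A (a • m) = a ^ d • φ_A m` always. -/
def IsHomogeneous (f : PolyLaw R M N) (d : ℕ) : Prop :=
  ∀ (A : Type u) [CommRing A] [Algebra R A] (a : A) (x : A ⊗[R] M),
    f.toFun A (a • x) = a ^ d • f.toFun A x

/-- The polynomial law induced by a linear map. -/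
noncomputable def ofLinear (ψ : M →ₗ[R] N) : PolyLaw R M N where
  toFun A _ _ := LinearMap.lTensor A ψ
  isCompat φ x := by
    show LinearMap.rTensor N φ.toLinearMap (LinearMap.lTensor _ ψ x)
      = LinearMap.lTensor _ ψ (LinearMap.rTensor M φ.toLinearMap x)
    rw [← LinearMap.comp_apply, ← LinearMap.comp_apply,
      LinearMap.rTensor_comp_lTensor, LinearMap.lTensor_comp_rTensor]

/-- Composition of polynomial laws. -/
def comp (g : PolyLaw R N P) (f : PolyLaw R M N) : PolyLaw R M P where
  toFun A _ _ x := g.toFun A (f.toFun A x)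
  isCompat φ x := by rw [g.isCompat φ, f.isCompat φ]

/-- Translation by an element `u : N`, as a polynomial law `N → N`. -/
noncomputable def translation (u : N) : PolyLaw R N N where
  toFun A _ _ x := x + (1 : A) ⊗ₜ[R] u
  isCompat φ x := by
    simp [map_add, LinearMap.rTensor_tmul, map_one]

end PolyLaw

namespace PolyLaw

variable {R : Type u} [CommRing R] {M N : Type u}
  [AddCommGroup M] [Module R M] [AddCommGroup N] [Module R N]

noncomputable instance : Zero (PolyLaw R M N) :=
  ⟨{ toFun := fun A _ _ _ => 0, isCompat := fun φ x => by simp }⟩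

noncomputable instance : Add (PolyLaw R M N) :=
  ⟨fun f g =>
    { toFun := fun A _ _ x => f.toFun A x + g.toFun A x
      isCompat := fun φ x => by simp [map_add, f.isCompat, g.isCompat] }⟩

noncomputable instance : Neg (PolyLaw R M N) :=
  ⟨fun f =>
    { toFun := fun A _ _ x => - f.toFun A x
      isCompat := fun φ x => by simp [map_neg, f.isCompat] }⟩

noncomputable instance : SMul R (PolyLaw R M N) :=
  ⟨fun r f =>
    { toFun := fun A _ _ x => r • f.toFun A x
      isCompat := fun φ x => by simp [map_smul, f.isCompat] }⟩

@[simp] lemma zero_toFun (A : Type u) [CommRing A] [Algebra R A] (x : A ⊗[R] M) :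
    (0 : PolyLaw R M N).toFun A x = 0 := rfl

@[simp] lemma add_toFun (f g : PolyLaw R M N) (A : Type u) [CommRing A] [Algebra R A]
    (x : A ⊗[R] M) : (f + g).toFun A x = f.toFun A x + g.toFun A x := rfl

@[simp] lemma neg_toFun (f : PolyLaw R M N) (A : Type u) [CommRing A] [Algebra R A]
    (x : A ⊗[R] M) : (-f).toFun A x = - f.toFun A x := rfl

@[simp] lemma smul_toFun (r : R) (f : PolyLaw R M N) (A : Type u) [CommRing A] [Algebra R A]
    (x : A ⊗[R] M) : (r • f).toFun A x = r • f.toFun A x := rfl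

noncomputable instance : AddCommGroup (PolyLaw R M N) where
  add_assoc a b c := ext' (by intros; simp [add_assoc])
  zero_add a := ext' (by intros; simp)
  add_zero a := ext' (by intros; simp)
  add_comm a b := ext' (by intros; simp [add_comm])
  neg_add_cancel a := ext' (by intros; simp)
  nsmul := nsmulRec
  zsmul := zsmulRec

noncomputable instance : Module R (PolyLaw R M N) where
  one_smul f := ext' (by intros; simp)
  mul_smul r s f := ext' (by intros; simp [mul_smul])
  smul_zero r := ext' (by intros; simp)
  smul_add r f g := ext' (by intros; simp)
  add_smul r s f := ext' (by intros; simp [add_smul])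
  zero_smul f := ext' (by intros; simp)

lemma rTensor_eq_algMap {A B : Type u} [CommRing A] [Algebra R A] [CommRing B] [Algebra R B]
    (φ : A →ₐ[R] B) (x : A ⊗[R] R) :
    LinearMap.rTensor R φ.toLinearMap x = Algebra.TensorProduct.map φ (AlgHom.id R R) x := by
  induction x using TensorProduct.induction_on with
  | zero => simp
  | tmul a r => simp
  | add x y hx hy => simp [map_add, hx, hy]

noncomputable instance : One (PolyLaw R M R) :=
  ⟨{ toFun := fun A _ _ _ => 1
     isCompat := fun φ x => by rw [rTensor_eq_algMap, map_one] }⟩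

noncomputable instance : Mul (PolyLaw R M R) :=
  ⟨fun f g =>
    { toFun := fun A _ _ x => f.toFun A x * g.toFun A x
      isCompat := fun φ x => by
        rw [rTensor_eq_algMap, map_mul, ← rTensor_eq_algMap, ← rTensor_eq_algMap,
          f.isCompat, g.isCompat] }⟩

@[simp] lemma one_toFun (A : Type u) [CommRing A] [Algebra R A] (x : A ⊗[R] M) :
    (1 : PolyLaw R M R).toFun A x = 1 := rfl

@[simp] lemma mul_toFun (f g : PolyLaw R M R) (A : Type u) [CommRing A] [Algebra R A]
    (x : A ⊗[R] M) : (f * g).toFun A x = f.toFun A x * g.toFun A x := rfl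

noncomputable instance : CommRing (PolyLaw R M R) :=
  { (inferInstance : AddCommGroup (PolyLaw R M R)) with
    mul := (· * ·)
    one := 1
    mul_assoc := fun a b c => ext' (by intros; simp [mul_assoc])
    one_mul := fun a => ext' (by intros; simp)
    mul_one := fun a => ext' (by intros; simp)
    left_distrib := fun a b c => ext' (by intros; simp [mul_add])
    right_distrib := fun a b c => ext' (by intros; simp [add_mul])
    mul_comm := fun a b => ext' (by intros; simp [mul_comm])
    zero_mul := fun a => ext' (by intros; simp)
    mul_zero := fun a => ext' (by intros; simp) }

noncomputable instance : Algebra R (PolyLaw R M R) :=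
  Algebra.ofModule (fun r x y => ext' (by intros; simp [smul_mul_assoc]))
    (fun r x y => ext' (by intros; simp [mul_smul_comm]))

end PolyLaw

open PolyLaw

section

variable (R : Type u) [CommRing R] (M : Type u) [AddCommGroup M] [Module R M]

/-- A rule assigning to every `R`-domain `D` a subset of `D ⊗ M`. -/
def AffRule : Type (u + 1) :=
  ∀ (D : Type u) [CommRing D] [IsDomain D] [Algebra R D], Set (D ⊗[R] M)

/-- The closed subset of `𝔸_M` cut out by a set `S` of polynomial laws `M → R`. -/
def vSet (S : Set (PolyLaw R M R)) : AffRule R M :=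
  fun D _ _ _ => {m | ∀ f ∈ S, f.toFun D m = 0}


section AuxBranching

variable {R : Type u} [CommRing R] {M : Type u} [AddCommGroup M] [Module R M]

lemma rTensorR_injective {A B : Type u} [CommRing A] [Algebra R A] [CommRing B] [Algebra R B]
    (φ : A →ₐ[R] B) (h : Function.Injective φ) :
    Function.Injective (LinearMap.rTensor R φ.toLinearMap : A ⊗[R] R →ₗ[R] B ⊗[R] R) := by
  have key : ∀ x : A ⊗[R] R, (TensorProduct.rid R B) (LinearMap.rTensor R φ.toLinearMap x)
      = φ (TensorProduct.rid R A x) := by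
    intro x
    induction x using TensorProduct.induction_on with
    | zero => simp
    | tmul a s => simp [TensorProduct.rid_tmul]
    | add x y hx hy => simp [map_add, hx, hy]
  intro x y hxy
  have h2 := congrArg (TensorProduct.rid R B) hxy
  rw [key, key] at h2
  exact (TensorProduct.rid R A).injective (h h2)

lemma toFun_eq_zero_iff {A B : Type u} [CommRing A] [Algebra R A] [CommRing B] [Algebra R B]
    (φ : A →ₐ[R] B) (h : Function.Injective φ) (f : PolyLaw R M R) (x : A ⊗[R] M) :
    f.toFun A x = 0 ↔ f.toFun B (LinearMap.rTensor M φ.toLinearMap x) = 0 := by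
  rw [← f.isCompat φ x]
  constructor
  · intro h0; rw [h0, map_zero]
  · intro h0
    exact rTensorR_injective φ h (by rw [h0, map_zero])

end AuxBranching

/-- **Branching lemma.**  Let `R` have Noetherian spectrum, `r ∈ R`, and let `p_1, ..., p_k` be
the minimal primes of `R/(r)` (pulled back to `R`).  Two closed subsets `X, Y` of `𝔸_M` are
equal iff their base changes to `R[1/r]` and to each `R/p_i` agree, i.e. iff `X(D) = Y(D)` for
every `R[1/r]`-domain `D` and for every `(R/p_i)`-domain `D`. -/
theorem branching_lemma [TopologicalSpace.NoetherianSpace (PrimeSpectrum R)]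
    [Module.Finite R M] (r : R) (X Y : AffRule R M)
    (hX : ∃ S, X = vSet R M S) (hY : ∃ T, Y = vSet R M T) :
    X = Y ↔
      ((∀ (D : Type u) [CommRing D] [IsDomain D] [Algebra (Localization.Away r) D],
          letI : Algebra R D :=
            ((algebraMap (Localization.Away r) D).comp
              (algebraMap R (Localization.Away r))).toAlgebra
          X D = Y D) ∧
        ∀ p ∈ (Ideal.span {r}).minimalPrimes,
          ∀ (D : Type u) [CommRing D] [IsDomain D] [Algebra (R ⧸ p) D],
            letI : Algebra R D :=
              ((algebraMap (R ⧸ p) D).comp (Ideal.Quotient.mk p)).toAlgebra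
            X D = Y D) := by
  constructor
  · rintro rfl
    exact ⟨fun D _ _ _ => rfl, fun p _ D _ _ _ => rfl⟩
  · rintro ⟨h1, h2⟩
    obtain ⟨S, rfl⟩ := hX
    obtain ⟨T, rfl⟩ := hY
    funext D instC instD instA
    by_cases hr : algebraMap R D r = 0
    · -- the image of `r` in `D` is zero
      haveI hq : (RingHom.ker (algebraMap R D)).IsPrime := RingHom.ker_isPrime _
      have hle : Ideal.span {r} ≤ RingHom.ker (algebraMap R D) := by
        rw [Ideal.span_le]
        simpa [RingHom.mem_ker] using hr
      obtain ⟨p, hp, hpq⟩ := Ideal.exists_minimalPrimes_le hle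
      letI : Algebra (R ⧸ p) D :=
        (Ideal.Quotient.lift p (algebraMap R D)
          (fun a ha => RingHom.mem_ker.mp (hpq ha))).toAlgebra
      have key := h2 p hp D
      have hinst : ((algebraMap (R ⧸ p) D).comp (Ideal.Quotient.mk p)).toAlgebra = instA :=
        Algebra.algebra_ext _ _ (fun x => by
          simp [RingHom.algebraMap_toAlgebra, Ideal.Quotient.lift_mk])
      rwa [hinst] at key
    · -- the image of `r` in `D` is nonzero, hence invertible in `Frac D`
      letI K := FractionRing D
      have hu : IsUnit (algebraMap R K r) := by
        rw [IsScalarTower.algebraMap_apply R D K]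
        exact IsLocalization.map_units K
          ⟨algebraMap R D r, mem_nonZeroDivisors_of_ne_zero hr⟩
      letI : Algebra (Localization.Away r) K :=
        (Localization.awayLift (algebraMap R K) r hu).toAlgebra
      have key := h1 K
      have hinst : ((algebraMap (Localization.Away r) K).comp
            (algebraMap R (Localization.Away r))).toAlgebra
          = (inferInstance : Algebra R K) :=
        Algebra.algebra_ext _ _ (fun x => by
          simp [RingHom.algebraMap_toAlgebra])
      rw [hinst] at key
      set ι : D →ₐ[R] K := IsScalarTower.toAlgHom R D K with hι_def
      have hι : Function.Injective ι := IsFractionRing.injective D K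
      ext m
      have hS : m ∈ vSet R M S D ↔ LinearMap.rTensor M ι.toLinearMap m ∈ vSet R M S K := by
        simp only [vSet, Set.mem_setOf_eq]
        exact forall₂_congr (fun f hf => toFun_eq_zero_iff ι hι f m)
      have hT : m ∈ vSet R M T D ↔ LinearMap.rTensor M ι.toLinearMap m ∈ vSet R M T K := by
        simp only [vSet, Set.mem_setOf_eq]
        exact forall₂_congr (fun f hf => toFun_eq_zero_iff ι hι f m)
      rw [hS, hT, key]

end
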